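/- Let D be a distribution over X × {±1} whose support can be partitioned into disjoint pairs of equal probability mass {(x, +1), (x', −1)} with d(x, x') = 0. Then every predictor h : X → [0,1] that is perfectly metric-fair with respect to d (i.e., |h(x) − h(x')| ≤ d(x,x') for all x, x') has expected absolute-loss error exactly 1/2: E_{(x,y)∼D} |h(x) − (y+1)/2| = 1/2. -/
import Mathlib

theorem perfectly_fair_error_half
    {X : Type*} (d : X → X → ℝ) (h : X → ℝ) (n : ℕ)
    (p : Fin n → X × X) (μ : Fin n → ℝ)
    (hμ : ∀ i, 0 ≤ μ i) (htotal : ∑ i, (μ i + μ i) = 1)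
    (hd0 : ∀ i, d (p i).1 (p i).2 = 0)
    (hrange : ∀ x, h x ∈ Set.Icc (0:ℝ) 1)
    (hfair : ∀ x x' : X, |h x - h x'| ≤ d x x') :
    ∑ i, μ i * (|h (p i).1 - 1| + |h (p i).2 - 0|) = 1 / 2 := by
  have key : ∀ i, |h (p i).1 - 1| + |h (p i).2 - 0| = 1 := by
    intro i
    have heq : h (p i).1 = h (p i).2 := by
      have h1 := hfair (p i).1 (p i).2
      rw [hd0 i] at h1
      have h2 := abs_nonneg (h (p i).1 - h (p i).2)
      have h3 : |h (p i).1 - h (p i).2| = 0 := le_antisymm h1 h2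
      have := abs_eq_zero.mp h3
      linarith
    obtain ⟨h0, h1⟩ := hrange (p i).1
    rw [abs_of_nonpos (by linarith), sub_zero, ← heq, abs_of_nonneg h0]
    ring
  calc ∑ i, μ i * (|h (p i).1 - 1| + |h (p i).2 - 0|) = ∑ i, μ i := by
        simp_rw [key]; simp
    _ = 1 / 2 := by linarith [htotal, Finset.sum_add_distrib (f := μ) (g := μ) (s := Finset.univ)]
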